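/- Let K be a field and F ∈ K[x]^{n×n} be nonsingular and column reduced with column degrees d and d_max = max_j d_j ≥ 1; let H be its Hermite normal form with diagonal degrees s = (s_1,…,s_n), s_max = max_i s_i, and u = (s_max,…,s_max) ∈ ℤ^n. For each i set q_i = ⌊s_i/d_max⌋ and r_i = s_i − q_i·d_max; let n̄ = n + Σ_i q_i, let E ∈ K[x]^{n×n̄} be the matrix [Ẽ_1,…,Ẽ_n] where Ẽ_i = [e_i, x^{s_i−q_i·d_max}·e_i, …, x^{s_i−d_max}·e_i] (q_i+1 columns, e_i the i-th standard basis column), and let s* ∈ ℤ^{n̄} be the concatenation over i of the q_i+1 entries (r_i, d_max, …, d_max). Suppose N ∈ K[x]^{(n+n̄)×n̄} is a [−u,−s*]-minimal kernel basis of the n×(n+n̄) matrix [F, −E], partitioned as N = [N_u; N_d] with N_d of dimension n̄×n̄, and let N̄ be the submatrix of the columns of N_d whose −s*-column degrees are at most 0. Then H is a column basis of E·N̄, and the nonzero columns of E·N̄ have −s-column degrees equal to 0. -/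

import Mathlib

open Polynomial Matrix

variable {K : Type*} [Field K]

/-- The degree of a polynomial, as an element of `WithBot ℤ` (`⊥` for the zero polynomial). -/
noncomputable def degZ (p : Polynomial K) : WithBot ℤ :=
  p.degree.map fun n : ℕ => (n : ℤ)

/-- The shifted column degree `cdeg_u p = max_i (deg p_i + u_i)` of a vector of polynomials. -/
noncomputable def cdegS {m : Type*} [Fintype m] (u : m → ℤ) (p : m → Polynomial K) : WithBot ℤ :=
  Finset.univ.sup fun i => degZ (p i) + (u i : WithBot ℤ)

/-- The row degree of row `i` of a polynomial matrix. -/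
noncomputable def rdeg {m n : Type*} [Fintype n] (P : Matrix m n (Polynomial K)) (i : m) :
    WithBot ℕ :=
  Finset.univ.sup fun j => (P i j).degree

/-- The shifted leading coefficient matrix `lcoeff (x^u · A · x^{-v})`. -/
noncomputable def lcoeffS {m n : Type*} (u : m → ℤ) (A : Matrix m n (Polynomial K)) (v : n → ℤ) :
    Matrix m n K :=
  Matrix.of fun i j => if 0 ≤ v j - u i then (A i j).coeff (v j - u i).toNat else 0

/-- A matrix over `K` has full column rank if its columns are linearly independent over `K`. -/
def FullColRankK {m n : Type*} (M : Matrix m n K) : Prop :=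
  LinearIndependent K fun j => fun i => M i j

/-- `A` is `u`-column reduced with `u`-column degrees `v`. -/
def IsColReducedWith {m n : Type*} [Fintype m] (u : m → ℤ) (A : Matrix m n (Polynomial K))
    (v : n → ℤ) : Prop :=
  (∀ j, cdegS u (fun i => A i j) = (v j : WithBot ℤ)) ∧ FullColRankK (lcoeffS u A v)

/-- `A` is `u`-column reduced. -/
def IsColReducedS {m n : Type*} [Fintype m] (u : m → ℤ) (A : Matrix m n (Polynomial K)) : Prop :=
  ∃ v : n → ℤ, IsColReducedWith u A v

/-- `F` is column reduced with (ordinary) column degrees `d`. -/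
def IsColReducedNat {m n : Type*} [Fintype m] (F : Matrix m n (Polynomial K)) (d : n → ℕ) : Prop :=
  IsColReducedWith (fun _ => (0 : ℤ)) F (fun j => (d j : ℤ))

/-- `N` is a (right) kernel basis of `F`. -/
def IsKernelBasis {m n k : Type*} [Fintype n] [Fintype k] (F : Matrix m n (Polynomial K))
    (N : Matrix n k (Polynomial K)) : Prop :=
  (LinearIndependent (Polynomial K) fun j => fun i => N i j) ∧
  F * N = 0 ∧
  ∀ q : n → Polynomial K, F.mulVec q = 0 → ∃ p : k → Polynomial K, N.mulVec p = q

/-- `N` is an `s`-minimal kernel basis of `F`. -/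
def IsMinimalKernelBasis {m n k : Type*} [Fintype n] [Fintype k] (F : Matrix m n (Polynomial K))
    (s : n → ℤ) (N : Matrix n k (Polynomial K)) : Prop :=
  IsKernelBasis F N ∧ IsColReducedS s N

/-- `T` is a column basis of `F`. -/
def IsColBasis {m n r : Type*} [Fintype n] [Fintype r] (F : Matrix m n (Polynomial K))
    (T : Matrix m r (Polynomial K)) : Prop :=
  (LinearIndependent (Polynomial K) fun j => fun i => T i j) ∧
  ∀ q : m → Polynomial K, (∃ p, F.mulVec p = q) ↔ (∃ p, T.mulVec p = q)

/-- `H` is in (column) Hermite normal form. -/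
def IsHermiteForm {n : ℕ} (H : Matrix (Fin n) (Fin n) (Polynomial K)) : Prop :=
  (∀ i j : Fin n, i < j → H i j = 0) ∧
  (∀ i : Fin n, (H i i).Monic) ∧
  (∀ i j : Fin n, j < i → (H i j).degree < (H i i).degree)

/-- `H` is the Hermite normal form of `F`. -/
def IsHermiteFormOf {n : ℕ} (F H : Matrix (Fin n) (Fin n) (Polynomial K)) : Prop :=
  IsHermiteForm H ∧ ∃ U : Matrix (Fin n) (Fin n) (Polynomial K), IsUnit U.det ∧ F * U = H

attribute [local instance] Classical.propDecidable

/-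
Write `H = F U` with `U` unimodular. Splitting each entry of a column `h` of `H` into chunks of
degrees `≤ r_i, ≤ d_max, …` gives `h = E t` with `deg t ≤ s*`, and `(U e_i, t)` is a kernel vector
of `[F, -E]` whose `[-u, -s*]`-degree is nonpositive (for the `F`-part by the predictable degree
property of the column reduced `F`). By the predictable degree property of the minimal kernel
basis `N`, such a vector is a combination of the columns of `N` of nonpositive degree only, that
is of the columns kept in `N̄`; so `H` lies in the column span of `E N̄`. Conversely
`E N̄ = F N_u' = H U⁻¹ N_u'`, where `N_u'` keeps the same columns of `N_u`. A nonzero column of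
`E N̄` has `-s`-degree `≤ 0` because its `N̄`-part has `-s*`-degree `≤ 0`, and `≥ 0` because a
nonzero vector `H w` has, in a row `i` where `deg w_i` is maximal, degree `s_i + deg w_i`.
-/

@[simp]
lemma degZ_zero : degZ (0 : K[X]) = ⊥ := by simp [degZ]

lemma degZ_of_ne_zero {p : K[X]} (hp : p ≠ 0) : degZ p = ((p.natDegree : ℤ) : WithBot ℤ) := by
  simp [degZ, degree_eq_natDegree hp]

lemma degZ_mul (p q : K[X]) : degZ (p * q) = degZ p + degZ q := by
  simp only [degZ, degree_mul]
  exact WithBot.map_add (Nat.castAddMonoidHom ℤ) _ _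

lemma degZ_le_natCast_iff {p : K[X]} {n : ℕ} : degZ p ≤ ((n : ℤ) : WithBot ℤ) ↔ p.degree ≤ n := by
  by_cases hp : p = 0
  · simp [hp]
  · rw [degZ_of_ne_zero hp, degree_eq_natDegree hp, WithBot.coe_le_coe, Nat.cast_le,
      Nat.cast_le]

lemma degZ_le_iff_coeff_eq_zero {p : K[X]} {m : ℤ} :
    degZ p ≤ (m : WithBot ℤ) ↔ ∀ k : ℕ, m < k → p.coeff k = 0 := by
  by_cases hp : p = 0
  · simp [hp]
  rw [degZ_of_ne_zero hp, WithBot.coe_le_coe]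
  refine ⟨fun h k hk => coeff_eq_zero_of_natDegree_lt (by omega), fun h => ?_⟩
  by_contra! hlt
  exact leadingCoeff_ne_zero.mpr hp (h _ hlt)

lemma eq_zero_of_degZ_le_of_neg {p : K[X]} {m : ℤ} (hm : m < 0) (h : degZ p ≤ (m : WithBot ℤ)) :
    p = 0 := by
  by_contra hp
  rw [degZ_of_ne_zero hp, WithBot.coe_le_coe] at h
  omega

lemma degZ_add_coe_le_iff {p : K[X]} {a b : ℤ} :
    degZ p + (a : WithBot ℤ) ≤ (b : WithBot ℤ) ↔ degZ p ≤ ((b - a : ℤ) : WithBot ℤ) := by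
  by_cases hp : p = 0
  · simp [hp]
  · rw [degZ_of_ne_zero hp, ← WithBot.coe_add, WithBot.coe_le_coe, WithBot.coe_le_coe]
    omega

lemma degZ_sum_le {ι : Type*} {s : Finset ι} {f : ι → K[X]} {m : ℤ}
    (h : ∀ b ∈ s, degZ (f b) ≤ (m : WithBot ℤ)) : degZ (∑ b ∈ s, f b) ≤ (m : WithBot ℤ) := by
  rw [degZ_le_iff_coeff_eq_zero]
  intro k hk
  rw [finsetSum_coeff]
  exact Finset.sum_eq_zero fun b hb => degZ_le_iff_coeff_eq_zero.mp (h b hb) k hk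

noncomputable def coeffZ (p : K[X]) (k : ℤ) : K :=
  if 0 ≤ k then p.coeff k.toNat else 0

@[simp]
lemma coeffZ_natCast (p : K[X]) (k : ℕ) : coeffZ p k = p.coeff k := by
  simp [coeffZ]

lemma coeffZ_sum {ι : Type*} (s : Finset ι) (f : ι → K[X]) (k : ℤ) :
    coeffZ (∑ b ∈ s, f b) k = ∑ b ∈ s, coeffZ (f b) k := by
  unfold coeffZ
  split_ifs <;> simp [finsetSum_coeff]

lemma coe_le_degZ_of_coeffZ_ne_zero {p : K[X]} {k : ℤ} (h : coeffZ p k ≠ 0) :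
    (k : WithBot ℤ) ≤ degZ p := by
  unfold coeffZ at h
  split_ifs at h with hk
  · have hp : p ≠ 0 := by rintro rfl; simp at h
    rw [degZ_of_ne_zero hp, WithBot.coe_le_coe]
    have := le_natDegree_of_ne_zero h
    omega
  · exact absurd rfl h

lemma coeffZ_mul_of_degZ_le {a b : K[X]} {α β : ℤ} (ha : degZ a ≤ (α : WithBot ℤ))
    (hb : degZ b ≤ (β : WithBot ℤ)) : coeffZ (a * b) (α + β) = coeffZ a α * coeffZ b β := by
  rcases lt_or_ge α 0 with hα | hα
  · simp [eq_zero_of_degZ_le_of_neg hα ha, coeffZ]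
  rcases lt_or_ge β 0 with hβ | hβ
  · simp [eq_zero_of_degZ_le_of_neg hβ hb, coeffZ]
  have hnat : ∀ {p : K[X]} {γ : ℤ}, 0 ≤ γ → degZ p ≤ (γ : WithBot ℤ) → p.natDegree ≤ γ.toNat := by
    intro p γ hγ h
    by_cases hp : p = 0
    · simp [hp]
    · rw [degZ_of_ne_zero hp, WithBot.coe_le_coe] at h
      omega
  simp only [coeffZ, if_pos hα, if_pos hβ, if_pos (add_nonneg hα hβ),
    Int.toNat_add hα hβ]
  exact coeff_mul_add_eq_of_natDegree_le (hnat hα ha) (hnat hβ hb)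

section ColumnDegree

variable {m : Type*} [Fintype m]

lemma cdegS_le_iff {u : m → ℤ} {p : m → K[X]} {b : WithBot ℤ} :
    cdegS u p ≤ b ↔ ∀ i, degZ (p i) + (u i : WithBot ℤ) ≤ b := by
  simp [cdegS]

lemma le_cdegS (u : m → ℤ) (p : m → K[X]) (i : m) :
    degZ (p i) + (u i : WithBot ℤ) ≤ cdegS u p :=
  Finset.le_sup (f := fun i => degZ (p i) + (u i : WithBot ℤ)) (Finset.mem_univ i)

lemma cdegS_le_coe_iff {u : m → ℤ} {p : m → K[X]} {t : ℤ} :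
    cdegS u p ≤ (t : WithBot ℤ) ↔ ∀ i, degZ (p i) ≤ ((t - u i : ℤ) : WithBot ℤ) := by
  simp only [cdegS_le_iff, degZ_add_coe_le_iff]

lemma cdegS_neg_nonpos_iff {b : m → ℤ} {p : m → K[X]} :
    cdegS (fun i => -b i) p ≤ 0 ↔ ∀ i, degZ (p i) ≤ (b i : WithBot ℤ) := by
  simp [← WithBot.coe_zero, cdegS_le_coe_iff]

lemma cdegS_sumElim {m' : Type*} [Fintype m'] (u : m → ℤ) (u' : m' → ℤ)
    (p : m → K[X]) (p' : m' → K[X]) :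
    cdegS (Sum.elim u u') (Sum.elim p p') = cdegS u p ⊔ cdegS u' p' := by
  simp only [cdegS, ← Finset.univ_disjSum_univ, Finset.sup_disjSum, Sum.elim_inl, Sum.elim_inr]

end ColumnDegree

namespace IsColReducedWith

variable {m ι : Type*} [Fintype m] {u : m → ℤ} {A : Matrix m ι K[X]} {v : ι → ℤ}

lemma degZ_le (h : IsColReducedWith u A v) (i : m) (c : ι) :
    degZ (A i c) ≤ ((v c - u i : ℤ) : WithBot ℤ) := by
  rw [← degZ_add_coe_le_iff, ← h.1 c]
  exact le_cdegS u (fun i => A i c) i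

/-- The leading coefficient matrix of `A` maps the coefficients `λ` of `p` at shifted degree `t`
to the coefficients of `A p` at shifted degree `t`; full column rank makes them nonzero. -/
lemma coe_le_cdegS_mulVec [Fintype ι] (h : IsColReducedWith u A v) {p : ι → K[X]} {t : ℤ}
    (hp : ∀ c, degZ (p c) ≤ ((t - v c : ℤ) : WithBot ℤ)) (hlead : ∃ c, coeffZ (p c) (t - v c) ≠ 0) :
    (t : WithBot ℤ) ≤ cdegS u (A *ᵥ p) := by
  set lam : ι → K := fun c => coeffZ (p c) (t - v c)
  have hlam : lam ≠ 0 := fun h0 => by obtain ⟨c, hc⟩ := hlead; exact hc (congrFun h0 c)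
  obtain ⟨i, hi⟩ : ∃ i, (lcoeffS u A v *ᵥ lam) i ≠ 0 := by
    by_contra! hzero
    have hinj : Function.Injective (lcoeffS u A v).mulVec := Matrix.mulVec_injective_iff.mpr h.2
    exact hlam (hinj (by rw [Matrix.mulVec_zero]; exact funext hzero))
  have hcoeff : coeffZ ((A *ᵥ p) i) (t - u i) = (lcoeffS u A v *ᵥ lam) i := by
    simp only [Matrix.mulVec, dotProduct, coeffZ_sum]
    refine Finset.sum_congr rfl fun c _ => ?_
    rw [show t - u i = (v c - u i) + (t - v c) by ring,
      coeffZ_mul_of_degZ_le (h.degZ_le i c) (hp c)]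
    rfl
  calc (t : WithBot ℤ) = ((t - u i : ℤ) : WithBot ℤ) + (u i : WithBot ℤ) := by
        rw [← WithBot.coe_add, sub_add_cancel]
    _ ≤ degZ ((A *ᵥ p) i) + (u i : WithBot ℤ) := by
        gcongr
        exact coe_le_degZ_of_coeffZ_ne_zero (hcoeff ▸ hi)
    _ ≤ cdegS u (A *ᵥ p) := le_cdegS u _ i

/-- The predictable degree property. -/
lemma degZ_add_le_cdegS_mulVec [Fintype ι] (h : IsColReducedWith u A v) (p : ι → K[X]) (j : ι) :
    degZ (p j) + (v j : WithBot ℤ) ≤ cdegS u (A *ᵥ p) := by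
  obtain ⟨j₀, -, hj₀⟩ := Finset.univ.exists_max_image (fun c => degZ (p c) + (v c : WithBot ℤ))
    ⟨j, Finset.mem_univ j⟩
  by_cases hp₀ : p j₀ = 0
  · have := hj₀ j (Finset.mem_univ j)
    rw [hp₀, degZ_zero, WithBot.bot_add, le_bot_iff] at this
    rw [this]
    exact bot_le
  set t : ℤ := (p j₀).natDegree + v j₀
  have hmax : ∀ c, degZ (p c) + (v c : WithBot ℤ) ≤ (t : WithBot ℤ) := fun c => by
    simpa [t, degZ_of_ne_zero hp₀] using hj₀ c (Finset.mem_univ c)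
  refine (hmax j).trans (h.coe_le_cdegS_mulVec (fun c => degZ_add_coe_le_iff.mp (hmax c))
    ⟨j₀, ?_⟩)
  rw [show t - v j₀ = (p j₀).natDegree by ring, coeffZ_natCast, coeff_natDegree]
  exact leadingCoeff_ne_zero.mpr hp₀

end IsColReducedWith

lemma IsMinimalKernelBasis.exists_mulVec_eq_of_cdegS_nonpos {m ι κ : Type*} [Fintype ι]
    [Fintype κ] {A : Matrix m ι K[X]} {w : ι → ℤ} {N : Matrix ι κ K[X]}
    (hN : IsMinimalKernelBasis A w N) {x : ι → K[X]} (hx : A *ᵥ x = 0) (hdeg : cdegS w x ≤ 0) :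
    ∃ p, N *ᵥ p = x ∧ ∀ c, p c ≠ 0 → cdegS w (fun i => N i c) ≤ 0 := by
  obtain ⟨⟨-, -, hgen⟩, v, hred⟩ := hN
  obtain ⟨p, rfl⟩ := hgen x hx
  refine ⟨p, rfl, fun c hc => ?_⟩
  have hle := (hred.degZ_add_le_cdegS_mulVec p c).trans hdeg
  rw [degZ_of_ne_zero hc, ← WithBot.coe_add, ← WithBot.coe_zero, WithBot.coe_le_coe] at hle
  rw [hred.1 c, ← WithBot.coe_zero, WithBot.coe_le_coe]
  omega

namespace IsHermiteForm

variable {n : ℕ} {H : Matrix (Fin n) (Fin n) K[X]}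

lemma degZ_le (hH : IsHermiteForm H) (a i : Fin n) :
    degZ (H a i) ≤ (((H a a).natDegree : ℤ) : WithBot ℤ) := by
  rcases lt_trichotomy a i with h | rfl | h
  · rw [hH.1 a i h, degZ_zero]
    exact bot_le
  · rw [degZ_of_ne_zero (hH.2.1 a).ne_zero]
  · rw [degZ_le_natCast_iff, ← degree_eq_natDegree (hH.2.1 a).ne_zero]
    exact (hH.2.2 a i h).le

lemma det_ne_zero (hH : IsHermiteForm H) : H.det ≠ 0 := by
  rw [det_of_isLowerTriangular H fun i j hij => hH.1 i j hij]
  exact Finset.prod_ne_zero_iff.mpr fun i _ => (hH.2.1 i).ne_zero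

/-- Below the diagonal `deg H_ij < deg H_ii` and above it `H_ij = 0`, so only the monic diagonal
entry reaches degree `deg H_ii + t`. -/
lemma coeff_mulVec_natDegree_add (hH : IsHermiteForm H) {w : Fin n → K[X]} {t : ℕ}
    (hw : ∀ j, (w j).natDegree ≤ t) (i : Fin n) :
    ((H *ᵥ w) i).coeff ((H i i).natDegree + t) = (w i).coeff t := by
  rw [mulVec, dotProduct, finsetSum_coeff, Finset.sum_eq_single i]
  · rw [coeff_mul_add_eq_of_natDegree_le le_rfl (hw i), (hH.2.1 i).coeff_natDegree, one_mul]
  · intro j _ hji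
    rcases lt_or_gt_of_ne hji with hlt | hgt
    · by_cases hHij : H i j = 0
      · rw [hHij, zero_mul, coeff_zero]
      refine coeff_eq_zero_of_natDegree_lt (natDegree_mul_le.trans_lt ?_)
      have := natDegree_lt_natDegree hHij (hH.2.2 i j hlt)
      have := hw j
      omega
    · rw [hH.1 i j hgt, zero_mul, coeff_zero]
  · simp

lemma nonneg_cdegS_mulVec (hH : IsHermiteForm H) {w : Fin n → K[X]} (hw : w ≠ 0) :
    0 ≤ cdegS (fun i => -((H i i).natDegree : ℤ)) (H *ᵥ w) := by
  obtain ⟨j₀, hj₀⟩ := Function.ne_iff.mp hw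
  obtain ⟨i, -, hi⟩ := Finset.univ.exists_max_image (fun j => (w j).degree) ⟨j₀, Finset.mem_univ _⟩
  have hwi : w i ≠ 0 := by
    intro h0
    have := hi j₀ (Finset.mem_univ _)
    rw [h0, degree_zero, le_bot_iff, degree_eq_bot] at this
    exact hj₀ this
  have hcoeff := hH.coeff_mulVec_natDegree_add
    (fun j => natDegree_le_natDegree (hi j (Finset.mem_univ j))) i
  have hne : ((H *ᵥ w) i).coeff ((H i i).natDegree + (w i).natDegree) ≠ 0 := by
    rw [hcoeff]
    exact leadingCoeff_ne_zero.mpr hwi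
  have hHw : (H *ᵥ w) i ≠ 0 := fun h0 => hne (by rw [h0, coeff_zero])
  have hdeg := le_natDegree_of_ne_zero hne
  refine le_trans ?_ (le_cdegS _ _ i)
  rw [degZ_of_ne_zero hHw, ← WithBot.coe_add, ← WithBot.coe_zero, WithBot.coe_le_coe]
  omega

end IsHermiteForm

namespace Matrix

variable {R l m n k : Type*} [CommSemiring R]

lemma exists_mul_eq_of_forall_exists_mulVec_eq [Fintype n] {A : Matrix m n R} {B : Matrix m k R}
    (h : ∀ i, ∃ p, A *ᵥ p = fun a => B a i) : ∃ P, B = A * P := by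
  choose P hP using h
  exact ⟨of fun c i => P i c, by ext a i; exact (congrFun (hP i) a).symm⟩

lemma exists_mulVec_eq_iff_of_mul_eq [Fintype n] [Fintype k] {A : Matrix m n R}
    {B : Matrix m k R} {W : Matrix k n R} {P : Matrix n k R} (hA : A = B * W) (hB : B = A * P)
    (y : m → R) : (∃ p, A *ᵥ p = y) ↔ ∃ p, B *ᵥ p = y :=
  ⟨fun ⟨p, hp⟩ => ⟨W *ᵥ p, by rw [mulVec_mulVec, ← hA, hp]⟩,
    fun ⟨p, hp⟩ => ⟨P *ᵥ p, by rw [mulVec_mulVec, ← hB, hp]⟩⟩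

def selectCols (P : n → Prop) [DecidablePred P] (A : Matrix m n R) : Matrix m n R :=
  of fun a c => if P c then A a c else 0

variable (P : n → Prop) [DecidablePred P]

lemma mul_selectCols [Fintype m] (B : Matrix l m R) (A : Matrix m n R) :
    B * selectCols P A = selectCols P (B * A) := by
  ext a c
  by_cases hc : P c <;> simp [selectCols, mul_apply, hc]

lemma mul_selectCols_apply_of_pos [Fintype m] (B : Matrix l m R) (A : Matrix m n R) {c : n}
    (hc : P c) (a : l) : (B * selectCols P A) a c = (B * A) a c := by
  rw [mul_selectCols]
  simp [selectCols, hc]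

lemma of_mul_selectCols_apply_ne_zero [Fintype m] {B : Matrix l m R} {A : Matrix m n R} {a : l}
    {c : n} (h : (B * selectCols P A) a c ≠ 0) : P c := by
  by_contra hc
  rw [mul_selectCols] at h
  simp [selectCols, hc] at h

lemma selectCols_mulVec_of_support [Fintype n] (A : Matrix m n R) {p : n → R}
    (hp : ∀ c, p c ≠ 0 → P c) : selectCols P A *ᵥ p = A *ᵥ p := by
  ext a
  refine Finset.sum_congr rfl fun c _ => ?_
  by_cases hc : p c = 0
  · simp [hc]
  · simp [selectCols, hp c hc]

end Matrix

/-- `(x, y)` is a kernel vector of `[F, -E]` of nonpositive shifted degree, so by the predictable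
degree property of `N` it only involves columns of `N` of nonpositive degree. -/
lemma exists_mul_selectCols_mulVec_eq {m n κ κ' : Type*} [Fintype m] [Fintype n] [Fintype κ]
    [Fintype κ'] {F : Matrix m n K[X]} {d : n → ℕ} (hF : IsColReducedNat F d)
    {E : Matrix m κ K[X]} {σ : ℤ} {τ : κ → ℤ} {Nu : Matrix n κ' K[X]} {Nd : Matrix κ κ' K[X]}
    (hN : IsMinimalKernelBasis (fromCols F (-E)) (Sum.elim (fun _ => -σ) fun c => -τ c)
      (fromRows Nu Nd))
    {x : n → K[X]} {y : κ → K[X]} (hxy : F *ᵥ x = E *ᵥ y)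
    (hx : ∀ a, degZ ((F *ᵥ x) a) ≤ (σ : WithBot ℤ)) (hy : ∀ c, degZ (y c) ≤ (τ c : WithBot ℤ)) :
    ∃ p, (E * selectCols (fun c => cdegS (fun b => -τ b) (fun b => Nd b c) ≤ 0) Nd) *ᵥ p =
      E *ᵥ y := by
  have hker : fromCols F (-E) *ᵥ Sum.elim x y = 0 := by
    rw [fromCols_mulVec_sumElim, neg_mulVec, hxy, add_neg_cancel]
  have hdeg : cdegS (Sum.elim (fun _ => -σ) fun c => -τ c) (Sum.elim x y) ≤ 0 := by
    rw [cdegS_sumElim, sup_le_iff, cdegS_neg_nonpos_iff, cdegS_neg_nonpos_iff]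
    refine ⟨fun j => ?_, hy⟩
    have hFx : cdegS (fun _ => 0) (F *ᵥ x) ≤ (σ : WithBot ℤ) :=
      cdegS_le_coe_iff.mpr fun a => by simpa using hx a
    have hj := degZ_add_coe_le_iff.mp ((IsColReducedWith.degZ_add_le_cdegS_mulVec hF x j).trans hFx)
    exact hj.trans (WithBot.coe_le_coe.mpr (by omega))
  obtain ⟨p, hp, hsupp⟩ := hN.exists_mulVec_eq_of_cdegS_nonpos hker hdeg
  rw [fromRows_mulVec] at hp
  refine ⟨p, ?_⟩
  rw [← mulVec_mulVec, selectCols_mulVec_of_support _ Nd fun c hc => ?_,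
    show Nd *ᵥ p = y from funext fun c => congrFun hp (Sum.inr c)]
  have hcol : (fun i => fromRows Nu Nd i c) = Sum.elim (fun a => Nu a c) (fun b => Nd b c) :=
    funext (Sum.rec (fun _ => rfl) (fun _ => rfl))
  have hc' := hsupp c hc
  rw [hcol, cdegS_sumElim, sup_le_iff] at hc'
  exact hc'.2

section Expansion

variable {Q : ℕ} (r dmax : ℕ)

/-- The power of `X` carried by the `k`-th column of a block `[1, X^r, X^(r+dmax), …]` of the
degree expansion matrix. -/
noncomputable def chunkPow (k : Fin (Q + 1)) : K[X] :=
  if k = 0 then 1 else X ^ (r + ((k : ℕ) - 1) * dmax)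

def chunkDeg (k : Fin (Q + 1)) : ℤ :=
  if k = 0 then r else dmax

lemma chunkPow_castSucc (k : Fin (Q + 1)) :
    chunkPow (K := K) r dmax k.castSucc = chunkPow r dmax k := by
  simp only [chunkPow, Fin.castSucc_eq_zero_iff, Fin.val_castSucc]

lemma chunkDeg_castSucc (k : Fin (Q + 1)) : chunkDeg r dmax k.castSucc = chunkDeg r dmax k := by
  simp only [chunkDeg, Fin.castSucc_eq_zero_iff]

lemma chunkPow_last : chunkPow (K := K) r dmax (Fin.last (Q + 1)) = X ^ (r + Q * dmax) := by
  rw [chunkPow, if_neg Fin.last_pos'.ne', Fin.val_last, Nat.add_sub_cancel]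

lemma chunkDeg_last : chunkDeg r dmax (Fin.last (Q + 1)) = dmax := by
  rw [chunkDeg, if_neg Fin.last_pos'.ne']

variable {r dmax}

lemma degZ_chunkPow_mul_le (k : Fin (Q + 1)) {x : K[X]}
    (hx : degZ x ≤ (chunkDeg r dmax k : WithBot ℤ)) :
    degZ (chunkPow r dmax k * x) ≤ (((r + Q * dmax : ℕ) : ℤ) : WithBot ℤ) := by
  unfold chunkPow
  unfold chunkDeg at hx
  split_ifs at hx ⊢ with hk
  · rw [one_mul]
    exact hx.trans (WithBot.coe_le_coe.mpr (by omega))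
  · have hk' : 1 ≤ (k : ℕ) := Nat.one_le_iff_ne_zero.mpr (Fin.val_ne_zero_iff.mpr hk)
    have hkQ : ((k : ℕ) - 1) * dmax + dmax ≤ Q * dmax := by
      rw [← Nat.succ_mul]
      exact Nat.mul_le_mul_right _ (by omega)
    rw [degZ_mul, degZ_of_ne_zero (pow_ne_zero _ X_ne_zero), natDegree_X_pow]
    calc _ ≤ (((r + ((k : ℕ) - 1) * dmax : ℕ) : ℤ) : WithBot ℤ) + ((dmax : ℤ) : WithBot ℤ) := by
          gcongr
      _ ≤ _ := by
        rw [← WithBot.coe_add, WithBot.coe_le_coe]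
        omega

lemma exists_chunk_expansion {p : K[X]}
    (hp : degZ p ≤ (((r + Q * dmax : ℕ) : ℤ) : WithBot ℤ)) :
    ∃ c : Fin (Q + 1) → K[X], (∀ k, degZ (c k) ≤ (chunkDeg r dmax k : WithBot ℤ)) ∧
      ∑ k, chunkPow r dmax k * c k = p := by
  induction Q generalizing p with
  | zero =>
    refine ⟨fun _ => p, fun k => ?_, by simp [chunkPow]⟩
    simpa [Fin.fin_one_eq_zero k, chunkDeg] using hp
  | succ Q ih =>
    set m := r + Q * dmax
    have hmon : (X ^ m : K[X]).Monic := monic_X_pow m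
    obtain ⟨c, hc, hsum⟩ := ih (p := p %ₘ X ^ m) <| by
      rw [degZ_le_natCast_iff]
      exact (degree_modByMonic_lt p hmon).le.trans (degree_X_pow_le m)
    have hlast : degZ (p /ₘ X ^ m) ≤ ((dmax : ℤ) : WithBot ℤ) := by
      rw [degZ_le_natCast_iff]
      refine degree_le_of_natDegree_le ?_
      rw [natDegree_divByMonic p hmon, natDegree_X_pow]
      have := natDegree_le_iff_degree_le.mpr (degZ_le_natCast_iff.mp hp)
      rw [Nat.succ_mul] at this
      omega
    refine ⟨Fin.snoc c (p /ₘ X ^ m), fun k => ?_, ?_⟩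
    · induction k using Fin.lastCases with
      | last => rwa [Fin.snoc_last, chunkDeg_last]
      | cast k => rw [Fin.snoc_castSucc, chunkDeg_castSucc]; exact hc k
    · simp only [Fin.sum_univ_castSucc, Fin.snoc_castSucc, Fin.snoc_last, chunkPow_castSucc,
        chunkPow_last, hsum]
      exact modByMonic_add_div p (X ^ m)

end Expansion

section ExpansionMatrix

variable {n : ℕ} {q : Fin n → ℕ} {r : Fin n → ℕ} {dmax : ℕ}

variable (q r dmax) in
/-- The degree expansion matrix `E = [Ẽ_1, …, Ẽ_n]`, `Ẽ_i = [e_i, X^(r_i) e_i, …]`. -/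
noncomputable def expansionMatrix : Matrix (Fin n) ((i : Fin n) × Fin (q i + 1)) K[X] :=
  of fun a c => if a = c.1 then chunkPow (r c.1) dmax c.2 else 0

lemma expansionMatrix_mulVec_apply (x : ((i : Fin n) × Fin (q i + 1)) → K[X]) (a : Fin n) :
    (expansionMatrix q r dmax *ᵥ x) a = ∑ k, chunkPow (r a) dmax k * x ⟨a, k⟩ := by
  rw [mulVec, dotProduct, Fintype.sum_sigma, Finset.sum_eq_single a]
  · simp [expansionMatrix]
  · intro j _ hj
    simp [expansionMatrix, Ne.symm hj]
  · simp

lemma cdegS_expansionMatrix_mulVec_nonpos {x : ((i : Fin n) × Fin (q i + 1)) → K[X]}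
    (hx : cdegS (fun c => -chunkDeg (r c.1) dmax c.2) x ≤ 0) :
    cdegS (fun a => -((r a + q a * dmax : ℕ) : ℤ)) (expansionMatrix q r dmax *ᵥ x) ≤ 0 := by
  rw [cdegS_neg_nonpos_iff] at hx ⊢
  intro a
  rw [expansionMatrix_mulVec_apply]
  exact degZ_sum_le fun k _ => degZ_chunkPow_mul_le k (hx ⟨a, k⟩)

lemma exists_expansionMatrix_mulVec_eq {y : Fin n → K[X]}
    (hy : ∀ a, degZ (y a) ≤ (((r a + q a * dmax : ℕ) : ℤ) : WithBot ℤ)) :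
    ∃ x, (∀ c, degZ (x c) ≤ (chunkDeg (r c.1) dmax c.2 : WithBot ℤ)) ∧
      expansionMatrix q r dmax *ᵥ x = y := by
  choose x hx hxy using fun a => exists_chunk_expansion (K := K) (Q := q a) (hy a)
  refine ⟨fun c => x c.1 c.2, fun c => hx c.1 c.2, funext fun a => ?_⟩
  rw [expansionMatrix_mulVec_apply]
  exact hxy a

end ExpansionMatrix

theorem hermite_from_expanded_kernel_basis_general {n : ℕ}
    (F H : Matrix (Fin n) (Fin n) (Polynomial K)) (d : Fin n → ℕ)
    (hFcr : IsColReducedNat F d)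
    (hH : IsHermiteFormOf F H)
    (dmax : ℕ)
    (s : Fin n → ℕ) (hs : ∀ i, s i = (H i i).natDegree)
    (smax : ℕ) (hsmax : smax = Finset.univ.sup s)
    (q r : Fin n → ℕ) (hq : ∀ i, q i = s i / dmax) (hr : ∀ i, r i = s i % dmax)
    (E : Matrix (Fin n) ((i : Fin n) × Fin (q i + 1)) (Polynomial K))
    (hE : ∀ (a : Fin n) (c : (i : Fin n) × Fin (q i + 1)),
      E a c = if a = c.1 then
          (if c.2 = (0 : Fin (q c.1 + 1)) then 1
            else Polynomial.X ^ (r c.1 + ((c.2 : ℕ) - 1) * dmax))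
        else 0)
    (sstar : ((i : Fin n) × Fin (q i + 1)) → ℤ)
    (hsstar : ∀ c, sstar c =
      if c.2 = (0 : Fin (q c.1 + 1)) then (r c.1 : ℤ) else (dmax : ℤ))
    (Nu : Matrix (Fin n) ((i : Fin n) × Fin (q i + 1)) (Polynomial K))
    (Nd : Matrix ((i : Fin n) × Fin (q i + 1)) ((i : Fin n) × Fin (q i + 1)) (Polynomial K))
    (hN : IsMinimalKernelBasis (fromCols F (-E))
      (Sum.elim (fun _ : Fin n => -(smax : ℤ)) (fun c => -(sstar c)))
      (fromRows Nu Nd))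
    (Nbar : Matrix ((i : Fin n) × Fin (q i + 1)) ((i : Fin n) × Fin (q i + 1)) (Polynomial K))
    (hNbar : ∀ a c, Nbar a c =
      if cdegS (fun b => -(sstar b)) (fun b => Nd b c) ≤ (0 : WithBot ℤ) then Nd a c else 0) :
    IsColBasis (E * Nbar) H ∧
    ∀ c, (∃ a, (E * Nbar) a c ≠ 0) →
      cdegS (fun i : Fin n => -(s i : ℤ)) (fun a => (E * Nbar) a c) = (0 : WithBot ℤ) := by
  obtain ⟨hHF, U, hU, hFU⟩ := hH
  obtain rfl : s = fun i => (H i i).natDegree := funext hs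
  have hrq a : r a + q a * dmax = (H a a).natDegree := by rw [hq, hr, Nat.mod_add_div']
  have hE' : E = expansionMatrix q r dmax := Matrix.ext hE
  obtain rfl : sstar = fun c => chunkDeg (r c.1) dmax c.2 := funext hsstar
  set P := fun c => cdegS (fun b => -chunkDeg (r b.1) dmax b.2) (fun b => Nd b c) ≤ 0
  obtain rfl : Nbar = selectCols P Nd := Matrix.ext hNbar
  have hNker : F * Nu = E * Nd := by
    simpa [fromCols_mul_fromRows, add_neg_eq_zero] using hN.1.2.1
  have hFH : F = H * U⁻¹ := by rw [← hFU, Matrix.mul_assoc, mul_nonsing_inv U hU, Matrix.mul_one]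
  have hENbar : E * selectCols P Nd = H * selectCols P (U⁻¹ * Nu) := by
    rw [mul_selectCols, mul_selectCols, ← hNker, hFH, Matrix.mul_assoc]
  have hgen i : ∃ p, (E * selectCols P Nd) *ᵥ p = fun a => H a i := by
    obtain ⟨y, hy, hEy⟩ := exists_expansionMatrix_mulVec_eq fun a => (hrq a).symm ▸ hHF.degZ_le a i
    rw [← hE'] at hEy
    have hFU' : F *ᵥ (fun j => U j i) = fun a => H a i := by funext a; rw [← hFU]; rfl
    rw [← hEy]
    refine exists_mul_selectCols_mulVec_eq hFcr hN (hFU'.trans hEy.symm) (fun a => ?_) hy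
    rw [hFU']
    exact (hHF.degZ_le a i).trans (by exact_mod_cast hsmax ▸ Finset.le_sup (Finset.mem_univ a))
  obtain ⟨Pm, hPm⟩ := exists_mul_eq_of_forall_exists_mulVec_eq hgen
  refine ⟨⟨linearIndependent_cols_of_det_ne_zero hHF.det_ne_zero,
    exists_mulVec_eq_iff_of_mul_eq hENbar hPm⟩, fun c hc => ?_⟩
  obtain ⟨a, ha⟩ := hc
  refine le_antisymm ?_ ?_
  · have hPc := of_mul_selectCols_apply_ne_zero P ha
    have hcol : (fun a => (E * selectCols P Nd) a c) = E *ᵥ fun b => Nd b c :=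
      funext (mul_selectCols_apply_of_pos P E Nd hPc)
    rw [hcol, hE']
    simpa only [hrq] using cdegS_expansionMatrix_mulVec_nonpos hPc
  · have hcol : (fun a => (E * selectCols P Nd) a c) =
        H *ᵥ fun j => selectCols P (U⁻¹ * Nu) j c := by rw [hENbar]; rfl
    rw [hcol]
    exact hHF.nonneg_cdegS_mulVec fun hw => ha (by simpa [hw] using congrFun hcol a)

/-- Lemma 6: with `E` the degree-expansion matrix and `s*` the expanded
shift, if `N = [N_u; N_d]` is a `[-u,-s*]`-minimal kernel basis of `[F, -E]` and `N̄` consists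
of the columns of `N_d` of `-s*`-column degree at most `0` (here: the other columns are zeroed
out), then the Hermite normal form `H` of `F` is a column basis of `E·N̄`, and the nonzero
columns of `E·N̄` have `-s`-column degree `0`.  Columns of `E` are indexed by the sigma type
`(i : Fin n) × Fin (q i + 1)`, of cardinality `n̄ = n + Σ q_i`. -/
theorem hermite_from_expanded_kernel_basis {n : ℕ}
    (F H : Matrix (Fin n) (Fin n) (Polynomial K)) (d : Fin n → ℕ)
    (hFns : F.det ≠ 0) (hFcr : IsColReducedNat F d)
    (hH : IsHermiteFormOf F H)
    (dmax : ℕ) (hdmax : dmax = Finset.univ.sup d) (hd1 : 1 ≤ dmax)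
    (s : Fin n → ℕ) (hs : ∀ i, s i = (H i i).natDegree)
    (smax : ℕ) (hsmax : smax = Finset.univ.sup s)
    (q r : Fin n → ℕ) (hq : ∀ i, q i = s i / dmax) (hr : ∀ i, r i = s i % dmax)
    (E : Matrix (Fin n) ((i : Fin n) × Fin (q i + 1)) (Polynomial K))
    (hE : ∀ (a : Fin n) (c : (i : Fin n) × Fin (q i + 1)),
      E a c = if a = c.1 then
          (if c.2 = (0 : Fin (q c.1 + 1)) then 1
            else Polynomial.X ^ (r c.1 + ((c.2 : ℕ) - 1) * dmax))
        else 0)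
    (sstar : ((i : Fin n) × Fin (q i + 1)) → ℤ)
    (hsstar : ∀ c, sstar c =
      if c.2 = (0 : Fin (q c.1 + 1)) then (r c.1 : ℤ) else (dmax : ℤ))
    (Nu : Matrix (Fin n) ((i : Fin n) × Fin (q i + 1)) (Polynomial K))
    (Nd : Matrix ((i : Fin n) × Fin (q i + 1)) ((i : Fin n) × Fin (q i + 1)) (Polynomial K))
    (hN : IsMinimalKernelBasis (fromCols F (-E))
      (Sum.elim (fun _ : Fin n => -(smax : ℤ)) (fun c => -(sstar c)))
      (fromRows Nu Nd))
    (Nbar : Matrix ((i : Fin n) × Fin (q i + 1)) ((i : Fin n) × Fin (q i + 1)) (Polynomial K))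
    (hNbar : ∀ a c, Nbar a c =
      if cdegS (fun b => -(sstar b)) (fun b => Nd b c) ≤ (0 : WithBot ℤ) then Nd a c else 0) :
    IsColBasis (E * Nbar) H ∧
    ∀ c, (∃ a, (E * Nbar) a c ≠ 0) →
      cdegS (fun i : Fin n => -(s i : ℤ)) (fun a => (E * Nbar) a c) = (0 : WithBot ℤ) :=
  hermite_from_expanded_kernel_basis_general F H d hFcr hH dmax s hs smax hsmax q r hq hr E hE sstar
    hsstar Nu Nd hN Nbar hNbar
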